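/- arXiv:1210.5838 — 4 statements merged into one kernel-verified Lean document; each statement's English description precedes it below -/
import Mathlib

section
/- Let F be a field and V ∈ Gr^alg(F) an element of the Sato Grassmannian. Then the Plücker coordinate at the partition κ(V) of V equals 1, and if a partition λ satisfies P_λ(V) ≠ 0, then λ ≥ κ(V) in the componentwise partial order on partitions. -/
/-! Counting the elements of the Maya diagram `M(V)` up to a large degree `s n` in two ways gives
`n + 1 = i(V) + s n`, so `κ(V)` vanishes eventually and is a partition. For `λ = κ(V)` the `j`-th
column of the matrix reads the coefficients in degree `s j`, so the matrix is unitriangular. If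
`λ i₀ < κ i₀`, then for rows `i ≤ i₀` and columns `j ≥ i₀` the requested degree exceeds
`s i = deg v i`; this block of zeros has `(i₀ + 1) + (n - i₀) > n` rows and columns, so every
permutation meets it and the determinant vanishes. -/

/- We model the paper's field `F((T)) = {∑_{i=-∞}^n v_i T^i}` by Mathlib's
`LaurentSeries F = HahnSeries ℤ F` via `T ↦ t⁻¹`: the paper's coefficient
`v_m` of `T^m` in `v` is `v.coeff (-m)` and the paper's degree is `-(order)`. -/

/-- A Maya diagram. -/
def IsMaya (M : Set ℤ) : Prop :=
  (M ∩ Set.Iic 0).Finite ∧ (Set.Ioi 0 \ M).Finite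

/-- Index of a Maya diagram. -/
noncomputable def mayaIndex (M : Set ℤ) (h : IsMaya M) : ℤ :=
  (h.1.toFinset.card : ℤ) - (h.2.toFinset.card : ℤ)

/-- `M(V)`, the set of (paper) degrees of nonzero elements of `V`. -/
def degSet {F : Type*} [Field F] (V : Submodule F (LaurentSeries F)) : Set ℤ :=
  {d | ∃ v ∈ V, v ≠ 0 ∧ -(v.order) = d}

open Filter

theorem StrictMono.apply_zero_add_le {s : ℕ → ℤ} (hs : StrictMono s) (n : ℕ) : s 0 + n ≤ s n := by
  induction n with
  | zero => simp
  | succ n ih => have := hs (Nat.lt_add_one n); push_cast; omega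

theorem StrictMono.tendsto_atTop_int {s : ℕ → ℤ} (hs : StrictMono s) : Tendsto s atTop atTop :=
  tendsto_atTop_mono hs.apply_zero_add_le
    (tendsto_atTop_add_const_left _ _ tendsto_natCast_atTop_atTop)

theorem StrictMono.image_Iic {α : Type*} [LinearOrder α] {s : ℕ → α} (hs : StrictMono s) (n : ℕ) :
    s '' Set.Iic n = Set.range s ∩ Set.Iic (s n) := by
  ext x
  simp only [Set.mem_image, Set.mem_Iic, Set.mem_inter_iff, Set.mem_range]
  constructor
  · rintro ⟨k, hk, rfl⟩
    exact ⟨⟨k, rfl⟩, hs.monotone hk⟩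
  · rintro ⟨⟨k, rfl⟩, hk⟩
    exact ⟨k, hs.le_iff_le.1 hk, rfl⟩

namespace IsMaya

variable {M : Set ℤ}

theorem ncard_inter_Iic (hM : IsMaya M) {b : ℤ} (hb : 0 ≤ b) (hbM : Set.Ioi b ⊆ M) :
    ((M ∩ Set.Iic b).ncard : ℤ) = mayaIndex M hM + b := by
  have hunion : (M ∩ Set.Iic b) ∪ (Set.Ioi 0 \ M) = (M ∩ Set.Iic 0) ∪ Set.Ioc 0 b := by
    ext x
    have hbx : b < x → x ∈ M := @hbM x
    simp only [Set.mem_union, Set.mem_inter_iff, Set.mem_Iic, Set.mem_sdiff, Set.mem_Ioi,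
      Set.mem_Ioc]
    by_cases hx : x ∈ M <;> simp [hx] at hbx ⊢ <;> omega
  have hfin : (M ∩ Set.Iic b).Finite :=
    (hM.1.union (Set.finite_Ioc 0 b)).subset (hunion ▸ Set.subset_union_left)
  have hcard := congrArg Set.ncard hunion
  rw [Set.ncard_union_eq (Set.disjoint_sdiff_right.mono_left Set.inter_subset_left) hfin hM.2,
    Set.ncard_union_eq ((Set.Iic_disjoint_Ioc le_rfl).mono_left Set.inter_subset_right) hM.1
      (Set.finite_Ioc 0 b)] at hcard
  rw [mayaIndex, ← Set.ncard_eq_toFinset_card _ hM.1, ← Set.ncard_eq_toFinset_card _ hM.2]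
  have hIoc : (Set.Ioc 0 b).ncard = b.toNat := by
    rw [← Finset.coe_Ioc, Set.ncard_coe_finset, Int.card_Ioc, sub_zero]
  omega

theorem eventually_natCast_add_one_eq (hM : IsMaya M) {s : ℕ → ℤ} (hs : StrictMono s)
    (hsM : Set.range s = M) :
    ∀ᶠ n : ℕ in atTop, (n : ℤ) + 1 = mayaIndex M hM + s n := by
  obtain ⟨c, hc⟩ := hM.2.bddAbove
  filter_upwards [hs.tendsto_atTop_int.eventually_ge_atTop (max c 0)] with n hn
  have hgaps : Set.Ioi (s n) ⊆ M := fun x hx => by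
    by_contra hxM
    have hxc : x ≤ c := hc ⟨(le_of_max_le_right hn).trans_lt hx, hxM⟩
    exact hxc.not_gt ((le_of_max_le_left hn).trans_lt hx)
  rw [← hM.ncard_inter_Iic (le_of_max_le_right hn) hgaps, ← hsM, ← hs.image_Iic,
    Set.ncard_image_of_injective _ hs.injective, Set.ncard_Iic_nat]
  norm_cast

end IsMaya

theorem Equiv.Perm.exists_le_apply_le {n : ℕ} (σ : Equiv.Perm (Fin n)) (k : Fin n) :
    ∃ j, k ≤ j ∧ σ j ≤ k := by
  by_contra! h
  have hmaps : Set.MapsTo σ (Finset.Ici k) (Finset.Ioi k) := fun j hj => by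
    simpa using h j (by simpa using hj)
  have := Finset.card_le_card_of_injOn σ hmaps σ.injective.injOn
  rw [Fin.card_Ici, Fin.card_Ioi] at this
  omega

theorem Matrix.det_eq_zero_of_apply_eq_zero_of_le_of_le {R : Type*} [CommRing R] {n : ℕ}
    (A : Matrix (Fin n) (Fin n) R) (k : Fin n) (hA : ∀ i j, i ≤ k → k ≤ j → A i j = 0) :
    A.det = 0 := by
  rw [Matrix.det_apply]
  refine Finset.sum_eq_zero fun σ _ => ?_
  obtain ⟨j, hkj, hσj⟩ := σ.exists_le_apply_le k
  exact smul_eq_zero_of_right _ (Finset.prod_eq_zero (Finset.mem_univ j) (hA _ _ hσj hkj))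

theorem Matrix.det_eq_one_of_isUpperTriangular {R m : Type*} [CommRing R] [Fintype m]
    [DecidableEq m] [LinearOrder m] {A : Matrix m m R} (hA : A.IsUpperTriangular)
    (hdiag : ∀ i, A i i = 1) : A.det = 1 := by
  rw [Matrix.det_of_isUpperTriangular hA]
  exact Finset.prod_eq_one fun i _ => hdiag i

theorem plucker_kappa_eq_one_and_support_general
    (F : Type*) [Field F] (V : Submodule F (LaurentSeries F))
    (hMaya : IsMaya (degSet V))
    (idx : ℤ) (hidx : idx = mayaIndex (degSet V) hMaya)
    (s : ℕ → ℤ) (hs : StrictMono s) (hsM : Set.range s = degSet V)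
    (v : ℕ → LaurentSeries F)
    (hmonic : ∀ i, (v i).coeff (-(s i)) = 1)
    (hdeg : ∀ i, ∀ m : ℤ, s i < m → (v i).coeff (-m) = 0)
    (htri : ∀ i j, j < i → (v i).coeff (-(s j)) = 0)
    (P : (ℕ → ℕ) → F)
    (hP : ∀ lam : ℕ → ℕ, (∀ i, lam (i + 1) ≤ lam i) → (∃ N, ∀ i, N ≤ i → lam i = 0) →
      ∃ N, ∀ n, N ≤ n → P lam =
        Matrix.det (Matrix.of fun i j : Fin n =>
          (v i).coeff (-(((j : ℤ) + 1) - (lam j : ℤ) - idx))))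
    (kap : ℕ → ℕ) (hkap : ∀ i : ℕ, (kap i : ℤ) = (i : ℤ) + 1 - idx - s i) :
    P kap = 1 ∧
      ∀ lam : ℕ → ℕ, (∀ i, lam (i + 1) ≤ lam i) → (∃ N, ∀ i, N ≤ i → lam i = 0) →
        P lam ≠ 0 → ∀ i, kap i ≤ lam i := by
  have hkap_succ (i : ℕ) : kap (i + 1) ≤ kap i := by
    have := hs (Nat.lt_add_one i); have := hkap i; have := hkap (i + 1); omega
  have hkap_zero : ∃ N, ∀ i, N ≤ i → kap i = 0 := by
    obtain ⟨N, hN⟩ := eventually_atTop.1 (hMaya.eventually_natCast_add_one_eq hs hsM)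
    exact ⟨N, fun i hi => by have := hN i hi; have := hkap i; omega⟩
  have hkap_col (j : ℕ) : ((j : ℤ) + 1) - kap j - idx = s j := by rw [hkap]; ring
  refine ⟨?_, fun lam hlam_succ hlam_zero hPlam i₀ => ?_⟩
  · obtain ⟨N, hN⟩ := hP kap hkap_succ hkap_zero
    rw [hN N le_rfl]
    simp only [hkap_col]
    exact Matrix.det_eq_one_of_isUpperTriangular (fun i j hji => htri i j hji) fun i => hmonic i
  · by_contra! hlt
    obtain ⟨N, hN⟩ := hP lam hlam_succ hlam_zero
    refine hPlam ((hN (max N (i₀ + 1)) (le_max_left _ _)).trans ?_)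
    refine Matrix.det_eq_zero_of_apply_eq_zero_of_le_of_le _ ⟨i₀, by omega⟩
      fun i j (hi : (i : ℕ) ≤ i₀) (hj : i₀ ≤ (j : ℕ)) => ?_
    have hsi : s i ≤ s i₀ := hs.monotone hi
    have hlam : lam j ≤ lam i₀ := antitone_nat_of_succ_le hlam_succ hj
    have := hkap i₀
    exact hdeg i _ (by omega)

/-- Let `V ∈ Gr^alg(F)` (i.e. `M(V)` is a Maya diagram) with
index `idx`, increasing enumeration `s` of `M(V)` and standard basis `v`:
`v i` is monic of degree `s i`, and `(v i)` has vanishing coefficient in degree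
`s j` for `i > j`.  Let `P` be the Plücker coordinate: for every partition
`lam`, `P lam` is the common value, for all large `n`, of the determinant
`det (v_{i, j − λ_j − i(V)})_{i,j=1}^n`.  Let `kap` be the partition `κ(V)`,
i.e. `κ_i = i − i(V) − s_i`.  Then `P κ(V) = 1`, and any partition `lam` with
`P lam ≠ 0` satisfies `lam ≥ κ(V)` componentwise. -/
theorem plucker_kappa_eq_one_and_support
    (F : Type*) [Field F] (V : Submodule F (LaurentSeries F))
    (hMaya : IsMaya (degSet V))
    (idx : ℤ) (hidx : idx = mayaIndex (degSet V) hMaya)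
    (s : ℕ → ℤ) (hs : StrictMono s) (hsM : Set.range s = degSet V)
    (v : ℕ → LaurentSeries F)
    (hvV : ∀ i, v i ∈ V)
    (hmonic : ∀ i, (v i).coeff (-(s i)) = 1)
    (hdeg : ∀ i, ∀ m : ℤ, s i < m → (v i).coeff (-m) = 0)
    (htri : ∀ i j, j < i → (v i).coeff (-(s j)) = 0)
    (P : (ℕ → ℕ) → F)
    (hP : ∀ lam : ℕ → ℕ, (∀ i, lam (i + 1) ≤ lam i) → (∃ N, ∀ i, N ≤ i → lam i = 0) →
      ∃ N, ∀ n, N ≤ n → P lam =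
        Matrix.det (Matrix.of fun i j : Fin n =>
          (v i).coeff (-(((j : ℤ) + 1) - (lam j : ℤ) - idx))))
    (kap : ℕ → ℕ) (hkap : ∀ i : ℕ, (kap i : ℤ) = (i : ℤ) + 1 - idx - s i) :
    P kap = 1 ∧
      ∀ lam : ℕ → ℕ, (∀ i, lam (i + 1) ≤ lam i) → (∃ N, ∀ i, N ≤ i → lam i = 0) →
        P lam ≠ 0 → ∀ i, kap i ≤ lam i :=
  plucker_kappa_eq_one_and_support_general F V hMaya idx hidx s hs hsM v hmonic hdeg htri P hP kap
    hkap
end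

section
/- Let p be a prime, K a finite extension of ℚ_p, π ∈ K with 0 < |π| < 1, and h(T) = h(T;π) := exp(∑_{k≥0} (πT)^{p^k}/p^k). Let κ be a partition with κ_1 + l(κ) ≤ p. Then |S_κ(h(T))| = |π|^{|κ|}. More precisely, S_κ(h(T)) = (∏_{(i,j) ∈ κ} HL(κ;(i,j)))^{-1} π^{|κ|}, where HL(κ;(i,j)) is the hook length of the cell (i,j) of κ, and each hook length appearing is a p-adic unit. -/
open scoped Classical

/-- The logarithmic-derivative datum of the Artin–Hasse exponential:
`∑_{k≥0} T^{p^k - 1}`, so that `e^{AH}` is the unique `F` with `F(0) = 1` and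
`F' = (∑_k T^{p^k-1})·F`, i.e. `F = exp (∑_k T^{p^k}/p^k)`. -/
noncomputable def ahLogDeriv (p : ℕ) : PowerSeries ℚ :=
  PowerSeries.mk fun n => if ∃ k : ℕ, n + 1 = p ^ k then (1 : ℚ) else 0

/-- Hook length of the cell `(i, j)` (0-indexed) of the partition `kap` of
length `l`: the cardinality of
`{(i',j') : (i'=i ∧ j ≤ j' < κ_i) ∨ (j'=j ∧ i ≤ i' < l ∧ j < κ_{i'})}`. -/
noncomputable def hookLength (kap : ℕ → ℕ) (l i j : ℕ) : ℕ :=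
  Nat.card {q : ℕ × ℕ //
    (q.1 = i ∧ j ≤ q.2 ∧ q.2 < kap i) ∨ (q.2 = j ∧ i ≤ q.1 ∧ q.1 < l ∧ j < kap q.1)}

/-!
Below `p` the Artin–Hasse exponential agrees with `exp`: its logarithmic derivative
`∑ₖ T^(pᵏ-1)` is `1` modulo `T^(p-1)`. Hence every entry of the Jacobi–Trudi matrix is
`π^n / n!` with `n = x_i - (l-1-j)`, where `x_i = κ_i + (l-1-i)`. Pulling `π^(x_i)/x_i!` out of
row `i` and `π^(-(l-1-j))` out of column `j` leaves the falling factorials `x_i(x_i-1)⋯`, i.e.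
polynomials of degree `l-1-j` in `x_i`, whose determinant is the Vandermonde `∏_{i<r} (x_i - x_r)`.
The hook lengths of row `i` and the differences `x_i - x_r`, `r > i`, are exactly `1, …, x_i`,
so `∏ x_i! = ∏ hooks · ∏_{i<r} (x_i - x_r)`, which gives the formula. All hook lengths are
at most `κ_1 + l - 1 < p`, hence `p`-adic units.
-/

open Finset PowerSeries Nat

namespace PowerSeries

theorem coeff_eq_inv_factorial_of_derivative_eq {R : Type*} [Field R] [CharZero R] {F : R⟦X⟧}
    {m : ℕ} (h0 : constantCoeff F = 1)
    (hd : ∀ n, n + 1 < m → coeff n (derivative R F) = coeff n F) :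
    ∀ n < m, coeff n F = (n ! : R)⁻¹ := by
  intro n hn
  induction n with
  | zero => simpa using h0
  | succ n ih =>
    have hrec := hd n hn
    rw [coeff_derivative, ih (by omega)] at hrec
    rw [Nat.factorial_succ, Nat.cast_mul, mul_inv, ← hrec]
    push_cast
    field_simp

end PowerSeries

theorem coeff_ahLogDeriv_mul_of_lt {p n : ℕ} (F : ℚ⟦X⟧) (hn : n + 1 < p) :
    coeff n (ahLogDeriv p * F) = coeff n F := by
  have hcoeff : ∀ a ≤ n, coeff a (ahLogDeriv p) = if a = 0 then 1 else 0 := by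
    intro a ha
    simp only [ahLogDeriv, coeff_mk]
    congr 1
    refine propext ⟨fun ⟨k, hk⟩ => ?_, fun ha0 => ⟨0, by simp [ha0]⟩⟩
    rcases k with _ | k
    · simpa using hk
    · have : p ≤ p ^ (k + 1) ∨ p = 0 := by
        rcases Nat.eq_zero_or_pos p with h | h
        · exact Or.inr h
        · exact Or.inl (Nat.le_self_pow (by omega) p)
      omega
  rw [coeff_mul, sum_eq_single (0, n)]
  · simp [hcoeff]
  · rintro ⟨a, b⟩ hab hne
    rw [HasAntidiagonal.mem_antidiagonal] at hab
    rw [hcoeff a (by omega), if_neg (by rintro rfl; simp_all), zero_mul]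
  · simp

theorem norm_natCast_eq_one_of_not_dvd {K : Type*} [NormedField K] [CharZero K] {p : ℕ}
    (hp : p.Prime) (hnorm : ∀ q : ℚ, ‖(q : K)‖ = (padicNorm p q : ℝ)) {n : ℕ} (hn : ¬p ∣ n) :
    ‖(n : K)‖ = 1 := by
  have := Fact.mk hp
  rw [← Rat.cast_natCast, hnorm, (padicNorm.nat_eq_one_iff n).mpr hn, Rat.cast_one]

theorem Nat.factorial_eq_prod_mul_prod {α β : Type*} {s : Finset α} {t : Finset β}
    {f : α → ℕ} {g : β → ℕ} {n : ℕ} (hf : Set.InjOn f s) (hg : Set.InjOn g t)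
    (hfg : ∀ a ∈ s, ∀ b ∈ t, f a ≠ g b) (hfn : ∀ a ∈ s, f a ∈ Icc 1 n)
    (hgn : ∀ b ∈ t, g b ∈ Icc 1 n) (hcard : #s + #t = n) :
    n ! = (∏ a ∈ s, f a) * ∏ b ∈ t, g b := by
  have hdisj : Disjoint (s.image f) (t.image g) := by
    simp only [disjoint_left, mem_image]
    rintro _ ⟨a, ha, rfl⟩ ⟨b, hb, hab⟩
    exact hfg a ha b hb hab.symm
  have hunion : s.image f ∪ t.image g = Icc 1 n := by
    refine eq_of_subset_of_card_le (union_subset ?_ ?_) ?_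
    · simpa [subset_iff] using hfn
    · simpa [subset_iff] using hgn
    · rw [card_union_of_disjoint hdisj, Finset.card_image_of_injOn hf,
        Finset.card_image_of_injOn hg]
      simp [hcard]
  rw [← prod_Ico_id_eq_factorial, Ico_add_one_right_eq_Icc, ← hunion, prod_union hdisj,
    prod_image hf, prod_image hg]

theorem Fin.prod_prod_Ioi_rev {M : Type*} [CommMonoid M] {n : ℕ} (f : Fin n → Fin n → M) :
    ∏ i, ∏ j ∈ Ioi i, f (Fin.rev j) (Fin.rev i) = ∏ i, ∏ j ∈ Ioi i, f i j := by
  rw [prod_sigma', prod_sigma']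
  refine prod_nbij' (fun q => ⟨Fin.rev q.2, Fin.rev q.1⟩) (fun q => ⟨Fin.rev q.2, Fin.rev q.1⟩)
    ?_ ?_ (by simp) (by simp) (by simp)
  all_goals
    rintro ⟨a, b⟩ hab
    simpa using hab

theorem Fin.prod_prod_Ioi_eq_prod_range_prod_Ioo {M : Type*} [CommMonoid M] (n : ℕ)
    (f : ℕ → ℕ → M) :
    ∏ i : Fin n, ∏ j ∈ Ioi i, f i j = ∏ i ∈ range n, ∏ j ∈ Ioo i n, f i j := by
  rw [← Fin.prod_univ_eq_prod_range fun i => ∏ j ∈ Ioo i n, f i j]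
  refine prod_congr rfl fun i _ => ?_
  rw [← Fin.map_valEmbedding_Ioi, prod_map]
  rfl

namespace Matrix

theorem det_descPochhammer_eval {R : Type*} [CommRing R] [IsDomain R] {n : ℕ}
    (v : Fin n → R) :
    det (of fun i j : Fin n => (descPochhammer R (n - 1 - j)).eval (v i)) =
      ∏ i, ∏ j ∈ Ioi i, (v i - v j) := by
  have hrev : (of fun i j : Fin n => (descPochhammer R (n - 1 - j)).eval (v i)) =
      (of fun i j : Fin n => (descPochhammer R j).eval (v (Fin.rev i))).submatrix
        Fin.revPerm Fin.revPerm := by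
    ext i j
    simp only [submatrix_apply, of_apply, Fin.revPerm_apply, Fin.rev_rev, Fin.val_rev]
    congr 2
    omega
  rw [hrev, det_submatrix_equiv_self, ← det_eval_matrixOfPolynomials_eq_det_vandermonde _ _
    (fun j => descPochhammer_natDegree R j) (fun j => monic_descPochhammer R j),
    det_vandermonde]
  exact Fin.prod_prod_Ioi_rev fun i j => v i - v j

theorem det_descFactorial {R : Type*} [CommRing R] [IsDomain R] {n : ℕ} (x : Fin n → ℕ) :
    det (of fun i j : Fin n => ((x i).descFactorial (n - 1 - j) : R)) =
      ∏ i, ∏ j ∈ Ioi i, ((x i : R) - x j) := by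
  simp_rw [← descPochhammer_eval_eq_descFactorial]
  exact det_descPochhammer_eval _

end Matrix

section TruncatedExp

variable {K : Type*} [Field K] [CharZero K] {c : K}

theorem pow_div_factorial_sub (hc : c ≠ 0) {x m : ℕ} (hm : m ≤ x) :
    c ^ (x - m) / ((x - m)! : K) = c ^ x / x ! * (c⁻¹ ^ m * x.descFactorial m) := by
  have hfac : ((x - m)! : K) * x.descFactorial m = x ! := by
    exact_mod_cast Nat.factorial_mul_descFactorial hm
  have hdesc : (x.descFactorial m : K) ≠ 0 := by
    exact_mod_cast (Nat.descFactorial_pos.2 hm).ne'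
  rw [← hfac, ← pow_sub_mul_pow c hm, inv_pow]
  field_simp

variable {f : ℤ → K} {N : ℕ}

theorem apply_sub_eq_of_eq_pow_div_factorial (hc : c ≠ 0)
    (hf : ∀ n : ℕ, n < N → f n = c ^ n / n !) (hneg : ∀ i : ℤ, i < 0 → f i = 0) {x m : ℕ}
    (hx : x < N) : f (x - m) = c ^ x / x ! * (c⁻¹ ^ m * x.descFactorial m) := by
  rcases le_or_gt m x with hm | hm
  · rw [← Nat.cast_sub hm, hf _ (by omega), pow_div_factorial_sub hc hm]
  · rw [hneg _ (by omega), Nat.descFactorial_eq_zero_iff_lt.2 hm]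
    simp

theorem Matrix.det_of_eq_pow_div_factorial (hc : c ≠ 0)
    (hf : ∀ n : ℕ, n < N → f n = c ^ n / n !) (hneg : ∀ i : ℤ, i < 0 → f i = 0) {n : ℕ}
    (x : Fin n → ℕ) (hx : ∀ i, x i < N) :
    det (of fun i j : Fin n => f (x i - (n - 1 - j : ℕ))) =
      (∏ i, c ^ x i / (x i)!) * ((∏ j : Fin n, c⁻¹ ^ (n - 1 - j)) *
        ∏ i, ∏ j ∈ Ioi i, ((x i : K) - x j)) := by
  simp_rw [apply_sub_eq_of_eq_pow_div_factorial hc hf hneg (hx _)]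
  refine (det_mul_column _ (of fun i j : Fin n =>
    c⁻¹ ^ (n - 1 - j) * ((x i).descFactorial (n - 1 - j) : K))).trans (congrArg _ ?_)
  exact (det_mul_row _ (of fun i j : Fin n => ((x i).descFactorial (n - 1 - j) : K))).trans
    (congrArg _ (det_descFactorial x))

end TruncatedExp

section Hook

variable {kap : ℕ → ℕ} {l : ℕ}

variable (kap l) in
noncomputable def columnLength (j : ℕ) : ℕ := #{r ∈ range l | j < kap r}

theorem lt_columnLength_iff (hkap : Antitone kap) {r j : ℕ} :
    r < columnLength kap l j ↔ r < l ∧ j < kap r := by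
  constructor
  · intro hr
    by_contra hcell
    have hsub : {s ∈ range l | j < kap s} ⊆ range r := by
      intro s hs
      simp only [mem_filter, mem_range] at hs ⊢
      by_contra hrs
      exact hcell ⟨by omega, hs.2.trans_le (hkap (by omega))⟩
    exact (card_le_card hsub).not_gt (by simpa [columnLength] using hr)
  · rintro ⟨hrl, hjr⟩
    have hsub : range (r + 1) ⊆ {s ∈ range l | j < kap s} := by
      intro s hs
      simp only [mem_filter, mem_range] at hs ⊢
      exact ⟨by omega, hjr.trans_le (hkap (by omega))⟩
    simpa [columnLength] using card_le_card hsub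

theorem columnLength_le (j : ℕ) : columnLength kap l j ≤ l :=
  (card_filter_le _ _).trans (card_range l).le

theorem hookLength_eq (hkap : Antitone kap) {i j : ℕ} (hi : i < l) (hj : j < kap i) :
    hookLength kap l i j = (kap i - j) + (columnLength kap l j - (i + 1)) := by
  have hcells : {q : ℕ × ℕ |
      (q.1 = i ∧ j ≤ q.2 ∧ q.2 < kap i) ∨ (q.2 = j ∧ i ≤ q.1 ∧ q.1 < l ∧ j < kap q.1)} =
      ↑(({i} ×ˢ Ico j (kap i)) ∪ (Ico (i + 1) (columnLength kap l j) ×ˢ {j})) := by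
    ext ⟨a, b⟩
    simp only [Set.mem_ofPred_eq, coe_union, coe_product, coe_singleton, coe_Ico, Set.mem_union,
      Set.mem_prod, Set.mem_singleton_iff, Set.mem_Ico, lt_columnLength_iff hkap]
    constructor
    · rintro (⟨rfl, hb⟩ | ⟨rfl, hia, hal, hja⟩)
      · exact Or.inl ⟨rfl, hb⟩
      · rcases hia.eq_or_lt with rfl | hia
        · exact Or.inl ⟨rfl, le_rfl, hja⟩
        · exact Or.inr ⟨⟨hia, hal, hja⟩, rfl⟩
    · rintro (⟨rfl, hb⟩ | ⟨⟨hia, hal, hja⟩, rfl⟩)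
      · exact Or.inl ⟨rfl, hb⟩
      · exact Or.inr ⟨rfl, by omega, hal, hja⟩
  have hdisj : Disjoint ({i} ×ˢ Ico j (kap i)) (Ico (i + 1) (columnLength kap l j) ×ˢ {j}) := by
    rw [disjoint_left]
    simp only [mem_product, mem_singleton, mem_Ico]
    omega
  rw [hookLength, ← Set.coe_ofPred, hcells, Nat.card_coe_set_eq, Set.ncard_coe_finset,
    card_union_of_disjoint hdisj]
  simp

variable (kap l) in
noncomputable def shiftedPart (i : ℕ) : ℕ := kap i + (l - 1 - i)

theorem shiftedPart_strictAntiOn (hkap : Antitone kap) :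
    StrictAntiOn (shiftedPart kap l) (Set.Iio l) := by
  intro a ha b hb hab
  have := hkap hab.le
  simp only [shiftedPart, Set.mem_Iio] at *
  omega

theorem shiftedPart_le (hkap : Antitone kap) (i : ℕ) :
    shiftedPart kap l i ≤ kap 0 + (l - 1) := by
  have := hkap (Nat.zero_le i)
  simp only [shiftedPart]
  omega

theorem hookLength_strictAntiOn (hkap : Antitone kap) {i : ℕ} (hi : i < l) :
    StrictAntiOn (hookLength kap l i) (Set.Iio (kap i)) := by
  intro a ha b hb hab
  simp only [Set.mem_Iio] at ha hb
  have hcol := (lt_columnLength_iff (l := l) hkap).2 ⟨hi, hb⟩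
  have hanti : columnLength kap l b ≤ columnLength kap l a :=
    card_le_card (monotone_filter_right _ fun _ _ h => hab.trans h)
  rw [hookLength_eq hkap hi ha, hookLength_eq hkap hi hb]
  omega

theorem hookLength_pos (hkap : Antitone kap) {i j : ℕ} (hi : i < l) (hj : j < kap i) :
    0 < hookLength kap l i j := by
  rw [hookLength_eq hkap hi hj]
  omega

theorem hookLength_le_shiftedPart (hkap : Antitone kap) {i j : ℕ} (hi : i < l)
    (hj : j < kap i) : hookLength kap l i j ≤ shiftedPart kap l i := by
  have := columnLength_le (kap := kap) (l := l) j
  rw [hookLength_eq hkap hi hj, shiftedPart]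
  omega

/-- `x_i - x_r - hookLength i j = (r - κ'_j) + (j - κ_r) + 1` in `ℤ`, and both brackets are
negative if `(r, j)` is a cell of `κ` and nonnegative otherwise. -/
theorem hookLength_ne_shiftedPart_sub (hkap : Antitone kap) {i j r : ℕ} (hj : j < kap i)
    (hir : i < r) (hr : r < l) :
    hookLength kap l i j ≠ shiftedPart kap l i - shiftedPart kap l r := by
  have hcol := (lt_columnLength_iff (l := l) hkap).2 ⟨hir.trans hr, hj⟩
  have hcolr := lt_columnLength_iff (l := l) hkap (r := r) (j := j)
  have := hkap hir.le
  rw [hookLength_eq hkap (hir.trans hr) hj, shiftedPart, shiftedPart]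
  by_cases hjr : j < kap r
  · have := hcolr.2 ⟨hr, hjr⟩
    omega
  · have : ¬r < columnLength kap l j := fun h => hjr (hcolr.1 h).2
    omega

theorem factorial_shiftedPart (hkap : Antitone kap) {i : ℕ} (hi : i < l) :
    (shiftedPart kap l i)! = (∏ j ∈ range (kap i), hookLength kap l i j) *
      ∏ r ∈ Ioo i l, (shiftedPart kap l i - shiftedPart kap l r) := by
  have hx : ∀ r ∈ Ioo i l, shiftedPart kap l r < shiftedPart kap l i := fun r hr =>
    shiftedPart_strictAntiOn hkap (Set.mem_Iio.2 hi) (Set.mem_Iio.2 (mem_Ioo.1 hr).2)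
      (mem_Ioo.1 hr).1
  refine Nat.factorial_eq_prod_mul_prod ?_ ?_ ?_ ?_ ?_ ?_
  · exact (hookLength_strictAntiOn hkap hi).injOn.mono (by simp)
  · intro a ha b hb hab
    dsimp only at hab
    have := hx a ha
    have := hx b hb
    exact (shiftedPart_strictAntiOn hkap).injOn (Set.mem_Iio.2 (mem_Ioo.1 ha).2)
      (Set.mem_Iio.2 (mem_Ioo.1 hb).2) (by omega)
  · intro j hj r hr
    exact hookLength_ne_shiftedPart_sub hkap (mem_range.1 hj) (mem_Ioo.1 hr).1 (mem_Ioo.1 hr).2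
  · intro j hj
    have := hookLength_pos hkap hi (mem_range.1 hj)
    have := hookLength_le_shiftedPart hkap hi (mem_range.1 hj)
    simp only [mem_Icc]
    omega
  · intro r hr
    have := hx r hr
    simp only [mem_Icc]
    omega
  · simp only [card_range, Nat.card_Ioo, shiftedPart]
    omega

theorem prod_factorial_shiftedPart {R : Type*} [CommRing R] (hkap : Antitone kap) :
    ∏ i : Fin l, ((shiftedPart kap l i)! : R) =
      (∏ i ∈ range l, ∏ j ∈ range (kap i), (hookLength kap l i j : R)) *
        ∏ i : Fin l, ∏ j ∈ Ioi i, ((shiftedPart kap l i : R) - shiftedPart kap l j) := by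
  rw [Fin.prod_univ_eq_prod_range (fun i => ((shiftedPart kap l i)! : R)),
    Fin.prod_prod_Ioi_eq_prod_range_prod_Ioo l fun i j =>
      (shiftedPart kap l i : R) - shiftedPart kap l j, ← prod_mul_distrib]
  refine prod_congr rfl fun i hi => ?_
  have hx : ∀ r ∈ Ioo i l, shiftedPart kap l r ≤ shiftedPart kap l i := fun r hr =>
    (shiftedPart_strictAntiOn hkap (Set.mem_Iio.2 (mem_range.1 hi))
      (Set.mem_Iio.2 (mem_Ioo.1 hr).2) (mem_Ioo.1 hr).1).le
  rw [factorial_shiftedPart hkap (mem_range.1 hi)]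
  push_cast [prod_congr rfl fun r hr => Nat.cast_sub (R := R) (hx r hr)]
  rfl

variable {K : Type*} [Field K] [CharZero K] {c : K} {f : ℤ → K} {N : ℕ}

theorem det_eq_pow_div_prod_hookLength (hkap : Antitone kap) (hc : c ≠ 0)
    (hf : ∀ n : ℕ, n < N → f n = c ^ n / n !) (hneg : ∀ i : ℤ, i < 0 → f i = 0)
    (hN : kap 0 + l ≤ N) :
    Matrix.det (Matrix.of fun i j : Fin l => f ((kap i : ℤ) - i + j)) =
      c ^ (∑ i ∈ range l, kap i) /
        ∏ i ∈ range l, ∏ j ∈ range (kap i), (hookLength kap l i j : K) := by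
  have hidx : ∀ i j : Fin l,
      (kap i : ℤ) - i + j = (shiftedPart kap l i : ℤ) - (l - 1 - j : ℕ) := by
    intro i j
    have := i.isLt
    have := j.isLt
    simp only [shiftedPart]
    omega
  have hxN : ∀ i : Fin l, shiftedPart kap l i < N := fun i =>
    (shiftedPart_le hkap i).trans_lt (by have := i.isLt; omega)
  have hsum : ∑ i : Fin l, shiftedPart kap l i =
      ∑ i ∈ range l, kap i + ∑ j : Fin l, (l - 1 - j) := by
    rw [Fin.sum_univ_eq_sum_range (fun i => shiftedPart kap l i),
      Fin.sum_univ_eq_sum_range (fun j => l - 1 - j), ← sum_add_distrib]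
    rfl
  have hfac := prod_factorial_shiftedPart (R := K) hkap (l := l)
  have hfac0 : ∏ i : Fin l, ((shiftedPart kap l i)! : K) ≠ 0 :=
    prod_ne_zero_iff.2 fun i _ => by exact_mod_cast (shiftedPart kap l i).factorial_ne_zero
  rw [hfac] at hfac0
  simp_rw [hidx]
  rw [Matrix.det_of_eq_pow_div_factorial hc hf hneg _ hxN, prod_div_distrib,
    prod_pow_eq_pow_sum, prod_pow_eq_pow_sum, hfac, hsum, pow_add, inv_pow]
  field_simp [left_ne_zero_of_mul hfac0, right_ne_zero_of_mul hfac0]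

end Hook

theorem schur_artin_hasse_hook_formula_general
    (p : ℕ) (hp : p.Prime)
    (K : Type*) [NormedField K] [CharZero K]
    (hnorm : ∀ q : ℚ, ‖(q : K)‖ = (padicNorm p q : ℝ))
    (π : K) (hπ0 : 0 < ‖π‖)
    (AH : PowerSeries ℚ)
    (hAH0 : PowerSeries.constantCoeff AH = 1)
    (hAHd : PowerSeries.derivative ℚ AH = ahLogDeriv p * AH)
    (h : ℤ → K)
    (hhneg : ∀ i : ℤ, i < 0 → h i = 0)
    (hh : ∀ i : ℕ, h i = ((PowerSeries.coeff i AH : ℚ) : K) * π ^ i)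
    (kap : ℕ → ℕ) (hkap : ∀ i, kap (i + 1) ≤ kap i)
    (l : ℕ)
    (hsmall : kap 0 + l ≤ p) :
    (∀ i j : ℕ, i < l → j < kap i → ‖(hookLength kap l i j : K)‖ = 1) ∧
    Matrix.det (Matrix.of fun i j : Fin l => h ((kap i : ℤ) - i + j)) =
        π ^ (∑ i ∈ Finset.range l, kap i) /
          (∏ i ∈ Finset.range l, ∏ j ∈ Finset.range (kap i),
            (hookLength kap l i j : K)) ∧
    ‖Matrix.det (Matrix.of fun i j : Fin l => h ((kap i : ℤ) - i + j))‖ =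
        ‖π‖ ^ (∑ i ∈ Finset.range l, kap i) := by
  have hanti : Antitone kap := antitone_nat_of_succ_le hkap
  have hunit : ∀ i j : ℕ, i < l → j < kap i → ‖(hookLength kap l i j : K)‖ = 1 := by
    intro i j hi hj
    have hlt := (hookLength_le_shiftedPart hanti hi hj).trans (shiftedPart_le hanti i)
    exact norm_natCast_eq_one_of_not_dvd hp hnorm
      (Nat.not_dvd_of_pos_of_lt (hookLength_pos hanti hi hj) (by omega))
  have hexp : ∀ n : ℕ, n < p → h n = π ^ n / n ! := by
    intro n hn
    rw [hh, coeff_eq_inv_factorial_of_derivative_eq hAH0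
      (fun k hk => by rw [hAHd, coeff_ahLogDeriv_mul_of_lt AH hk]) n hn]
    push_cast
    ring
  have hdet := det_eq_pow_div_prod_hookLength hanti (norm_pos_iff.1 hπ0) hexp hhneg hsmall
  refine ⟨hunit, hdet, ?_⟩
  rw [hdet, norm_div, norm_pow, norm_prod, prod_eq_one fun i hi => ?_, div_one]
  rw [norm_prod]
  exact prod_eq_one fun j hj => hunit i j (mem_range.1 hi) (mem_range.1 hj)

/-- Let `K` be a finite extension of `ℚ_p` (an ultrametric
normed field whose norm extends the `p`-adic norm of `ℚ`), `π ∈ K` with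
`0 < |π| < 1`, and `h(T) = e^{AH}(πT) = exp(∑_{k≥0} (πT)^{p^k}/p^k) = ∑ h_i T^i`.
Let `kap` be a partition with `κ_1 + l(κ) ≤ p` (length exactly `l`).  Then
`S_κ(h) = (∏_{(i,j) ∈ κ} HL(κ;(i,j)))⁻¹ · π^{|κ|}`, each hook length occurring
is a `p`-adic unit, and `|S_κ(h)| = |π|^{|κ|}`. -/
theorem schur_artin_hasse_hook_formula
    (p : ℕ) (hp : p.Prime)
    (K : Type*) [NormedField K] [IsUltrametricDist K] [CharZero K]
    (hnorm : ∀ q : ℚ, ‖(q : K)‖ = (padicNorm p q : ℝ))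
    (π : K) (hπ0 : 0 < ‖π‖) (hπ : ‖π‖ < 1)
    (AH : PowerSeries ℚ)
    (hAH0 : PowerSeries.constantCoeff AH = 1)
    (hAHd : PowerSeries.derivative ℚ AH = ahLogDeriv p * AH)
    (h : ℤ → K)
    (hhneg : ∀ i : ℤ, i < 0 → h i = 0)
    (hh : ∀ i : ℕ, h i = ((PowerSeries.coeff i AH : ℚ) : K) * π ^ i)
    (kap : ℕ → ℕ) (hkap : ∀ i, kap (i + 1) ≤ kap i)
    (l : ℕ) (hl : ∀ i, l ≤ i → kap i = 0) (hlen : ∀ i, i < l → 0 < kap i)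
    (hsmall : kap 0 + l ≤ p) :
    (∀ i j : ℕ, i < l → j < kap i → ‖(hookLength kap l i j : K)‖ = 1) ∧
    Matrix.det (Matrix.of fun i j : Fin l => h ((kap i : ℤ) - i + j)) =
        π ^ (∑ i ∈ Finset.range l, kap i) /
          (∏ i ∈ Finset.range l, ∏ j ∈ Finset.range (kap i),
            (hookLength kap l i j : K)) ∧
    ‖Matrix.det (Matrix.of fun i j : Fin l => h ((kap i : ℤ) - i + j))‖ =
        ‖π‖ ^ (∑ i ∈ Finset.range l, kap i) :=
  schur_artin_hasse_hook_formula_general p hp K hnorm π hπ0 AH hAH0 hAHd h hhneg hh kap hkap l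
    hsmall
end

section
/- Let d ≥ 1, let ζ_d ∈ ℤ_p be a primitive d-th root of unity (p ≡ 1 mod d), and let δ be a ring automorphism of O_K[[T]] of order d over O_K (K a p-adic field) preserving the ideal (T). Then there exists a unit u(T) ∈ O_K[[T]]^* such that δ(u(T)·T) = ζ·u(T)·T, where ζ ∈ O_K^* is the d-th root of unity with δ(T) ≡ ζ T mod T^2·O_K[[T]] up to units. In other words, the parameter T can be replaced by one on which δ acts linearly by a root of unity. -/
/-!
Write `δ(T) = T·g`. Iterating gives `δᵏ(T) = T·∏_{j<k} δʲ(g)`, so `δᵈ = id` forces the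
cocycle condition `∏_{j<d} δʲ(g) = 1`, and since `δ` fixes constant terms, `ζ := g(0)` is a
`d`-th root of unity. The normalized cocycle `v := ζ⁻¹g` is then split by the averaged
partial products `u := ∑_{i<d} ∏_{j<i} δʲ(v)` (multiplicative Hilbert 90), whose constant
term is `d`; hence `u` is a unit and `δ(uT) = δ(u)·T·ζ·v = ζ·uT`.
-/

open PowerSeries Finset

section Cocycle

variable {M A : Type*} [Monoid M] [CommSemiring A] [MulSemiringAction M A]

theorem mul_smul_prod_range_pow_smul (g : M) (v : A) (i : ℕ) :
    v * g • ∏ j ∈ range i, (g ^ j) • v = ∏ j ∈ range (i + 1), (g ^ j) • v := by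
  simp only [smul_prod', smul_smul, ← pow_succ', prod_range_succ' _ i, pow_zero, one_smul,
    mul_comm v]

theorem pow_smul_eq_mul_prod_of_smul_eq_mul {g : M} {x w : A} (h : g • x = x * w) (k : ℕ) :
    (g ^ k) • x = x * ∏ j ∈ range k, (g ^ j) • w := by
  induction k with
  | zero => simp
  | succ k ih => rw [pow_succ', mul_smul, ih, smul_mul', h, mul_assoc,
      mul_smul_prod_range_pow_smul]

theorem prod_range_pow_smul_eq_one {g : M} {d : ℕ} (hg : g ^ d = 1) {x w : A}
    (hx : IsLeftRegular x) (h : g • x = x * w) : ∏ j ∈ range d, (g ^ j) • w = 1 :=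
  hx.eq_iff.mp (by rw [← pow_smul_eq_mul_prod_of_smul_eq_mul h, hg, one_smul, mul_one])

theorem prod_range_pow_smul_mul {g : M} {c : A} (hc : ∀ j, (g ^ j) • c = c) (w : A) (d : ℕ) :
    ∏ j ∈ range d, (g ^ j) • (c * w) = c ^ d * ∏ j ∈ range d, (g ^ j) • w := by
  simp only [smul_mul', hc, prod_mul_distrib, prod_const, card_range]

/-- Multiplicative Hilbert 90 for a cyclic action. -/
theorem mul_smul_sum_prod_range_pow_smul {g : M} {d : ℕ} {v : A}
    (hv : ∏ j ∈ range d, (g ^ j) • v = 1) :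
    v * g • ∑ i ∈ range d, ∏ j ∈ range i, (g ^ j) • v =
      ∑ i ∈ range d, ∏ j ∈ range i, (g ^ j) • v := by
  rw [smul_sum, mul_sum]
  simp only [mul_smul_prod_range_pow_smul]
  cases d with
  | zero => simp
  | succ n => rw [sum_range_succ, hv, sum_range_succ', prod_range_zero, add_comm]

end Cocycle

section PowerSeries

variable {R : Type*} [CommRing R]

theorem constantCoeff_map_of_constantCoeff_map_X {F : Type*} [FunLike F R⟦X⟧ R⟦X⟧]
    [AlgHomClass F R R⟦X⟧ R⟦X⟧] (φ : F) (hφ : constantCoeff (φ X) = 0) (f : R⟦X⟧) :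
    constantCoeff (φ f) = constantCoeff f := by
  have hC (c : R) : φ (C c) = C c := by
    simpa [PowerSeries.algebraMap_apply] using AlgHomClass.commutes φ c
  conv_lhs => rw [eq_X_mul_shift_add_const f, map_add, map_mul, hC]
  simp [hφ]

theorem AlgEquiv.pow_smul_C (δ : R⟦X⟧ ≃ₐ[R] R⟦X⟧) (j : ℕ) (r : R) :
    (δ ^ j) • C r = C r := by
  simpa [PowerSeries.algebraMap_apply] using (δ ^ j).commutes r

variable {δ : R⟦X⟧ ≃ₐ[R] R⟦X⟧} {g : R⟦X⟧}

theorem constantCoeff_pow_smul_of_map_X (hg : δ X = X * g) (j : ℕ) (f : R⟦X⟧) :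
    constantCoeff ((δ ^ j) • f) = constantCoeff f :=
  constantCoeff_map_of_constantCoeff_map_X (δ ^ j)
    (by rw [← AlgEquiv.smul_def, pow_smul_eq_mul_prod_of_smul_eq_mul hg]; simp) f

theorem prod_range_pow_smul_eq_one_of_map_X {d : ℕ} (hδd : δ ^ d = 1) (hg : δ X = X * g) :
    ∏ j ∈ range d, (δ ^ j) • g = 1 :=
  prod_range_pow_smul_eq_one hδd (fun _ _ => X_mul_cancel) (by rwa [AlgEquiv.smul_def])

theorem constantCoeff_pow_eq_one_of_map_X {d : ℕ} (hδd : δ ^ d = 1) (hg : δ X = X * g) :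
    constantCoeff g ^ d = 1 := by
  simpa only [map_prod, constantCoeff_pow_smul_of_map_X hg, prod_const, card_range, map_one] using
    congrArg constantCoeff (prod_range_pow_smul_eq_one_of_map_X hδd hg)

theorem isUnit_sum_prod_range_pow_smul {d : ℕ} (hd : IsUnit (d : R)) (hg : δ X = X * g)
    {v : R⟦X⟧} (hv : constantCoeff v = 1) :
    IsUnit (∑ i ∈ range d, ∏ j ∈ range i, (δ ^ j) • v) := by
  rw [isUnit_iff_constantCoeff]
  simpa only [map_sum, map_prod, constantCoeff_pow_smul_of_map_X hg, hv, prod_const_one,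
    sum_const, card_range, nsmul_one] using hd

end PowerSeries

/-- Let `R` be a commutative ring (e.g. `O_K` for a `p`-adic
field `K`, with `d` invertible since `p ≡ 1 mod d`), and let `δ` be an
`R`-algebra automorphism of `R[[T]]` of order `d` preserving the ideal `(T)`.
Then there is a `d`-th root of unity `ζ` with `δ(T) ≡ ζT mod T²` (i.e.
`ζ` is the linear coefficient of `δ(T)`), and a unit `u(T) ∈ R[[T]]ˣ` with
`δ(u(T)·T) = ζ·u(T)·T`: the parameter `T` can be replaced by one on which `δ`
acts linearly by a root of unity. -/
theorem linearize_order_d_automorphism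
    (R : Type*) [CommRing R] (d : ℕ) (hd1 : 1 ≤ d)
    (hdunit : IsUnit (d : R))
    (δ : PowerSeries R ≃ₐ[R] PowerSeries R)
    (horder : orderOf δ = d)
    (hT : δ PowerSeries.X ∈ Ideal.span ({PowerSeries.X} : Set (PowerSeries R))) :
    ∃ ζ : R, ζ ^ d = 1 ∧ IsUnit ζ ∧
      (PowerSeries.coeff 1) (δ PowerSeries.X) = ζ ∧
      ∃ u : PowerSeries R, IsUnit u ∧
        δ (u * PowerSeries.X) = PowerSeries.C ζ * (u * PowerSeries.X) := by
  obtain ⟨g, hg⟩ := Ideal.mem_span_singleton.mp hT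
  have hδd : δ ^ d = 1 := horder ▸ pow_orderOf_eq_one δ
  obtain ⟨ζ, hζ⟩ : ∃ ζ, constantCoeff g = ζ := ⟨_, rfl⟩
  have hζd : ζ ^ d = 1 := hζ ▸ constantCoeff_pow_eq_one_of_map_X hδd hg
  obtain ⟨ζu, hζu⟩ := IsUnit.of_pow_eq_one hζd (by omega)
  have hζinv : (↑ζu⁻¹ : R) * ζ = 1 := hζu ▸ ζu.inv_mul
  set v := C (↑ζu⁻¹ : R) * g
  have hv : ∏ j ∈ range d, (δ ^ j) • v = 1 := by
    rw [prod_range_pow_smul_mul (δ.pow_smul_C · _),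
      prod_range_pow_smul_eq_one_of_map_X hδd hg, mul_one, ← map_pow,
      ← mul_one (_ ^ d), ← hζd, ← mul_pow, hζinv, one_pow, map_one]
  have hgv : g = C ζ * v := by
    rw [← mul_assoc, ← map_mul, mul_comm ζ, hζinv, map_one, one_mul]
  set u := ∑ i ∈ range d, ∏ j ∈ range i, (δ ^ j) • v
  refine ⟨ζ, hζd, ⟨ζu, hζu⟩, by simp [hg, hζ],
    u, isUnit_sum_prod_range_pow_smul hdunit hg (by simp [v, hζ, hζinv]), ?_⟩
  calc δ (u * X) = C ζ * ((v * δ • u) * X) := by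
        rw [map_mul, hg, hgv, AlgEquiv.smul_def]; ring
    _ = C ζ * (u * X) := by rw [mul_smul_sum_prod_range_pow_smul hv]
end

section
/- Let d ≥ 3, b ≥ 1 be integers, p a prime with p ≡ 1 mod d, and for k ≥ 0 write p^k − 1 = d·m_k. With x(T), y(T) ∈ ℤ[[T]][T^{-1}] the formal parametrization of y^d = x^a(x−1)^b at infinity (x(T) = T^d u(T), y(T) = T x(T), u ∈ 1+Tℤ[[T]] with u^{b−1} = (u − T^{−d})^b), one has the identity T^{p^k} = ∑_{i = m_k − b m_k}^{m_k} γ_i^{(k)} x(T)^i T, where γ_i^{(k)} = (−1)^{i − m_k} \binom{m_k b}{m_k − i}. In particular the coefficient of x(T)^0·T is γ_0^{(k)} = \binom{m_k b}{m_k} = \binom{((p^k−1)/d)·b}{(p^k−1)/d}. -/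
/-! Here `T^n = single (-n) 1` in `ℚ((T⁻¹))`. Put `s = T^d`, so that `x = s u` and
`x - 1 = s (u - s⁻¹)`. The curve equation `u^{b-1} = (u - s⁻¹)^b` turns into
`(1 - x⁻¹)^b = u⁻¹`, hence `x^m (1 - x⁻¹)^{bm} = s^m = T^{dm}`, and `T^{p^k} = T^{dm} T` is the
binomial expansion of `x^m (1 - x⁻¹)^{bm}` times `T`. The sign of `γ_0` is `(-1)^m = 1` because
`m` is even: `p` is odd and `d` is odd. -/

open HahnSeries

section Field

variable {K : Type*} [Field K]

theorem one_sub_inv_mul_pow_eq_inv {s u : K} {b : ℕ} (hs : s ≠ 0) (hu : u ≠ 0) (hb : 0 < b)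
    (h : u ^ (b - 1) = (u - s⁻¹) ^ b) : (1 - (s * u)⁻¹) ^ b = u⁻¹ := by
  have hsub : 1 - (s * u)⁻¹ = (u - s⁻¹) / u := by field_simp
  obtain ⟨c, rfl⟩ := Nat.exists_eq_add_of_lt hb
  rw [hsub, div_pow, Nat.add_sub_cancel] at *
  rw [← h, pow_succ, ← div_div, div_self (pow_ne_zero _ hu), one_div]

theorem pow_mul_one_sub_inv_pow_eq_sum {R : Type*} [Ring R] [Module R K] {x : K}
    (hx : x ≠ 0) (m n : ℕ) :
    x ^ m * (1 - x⁻¹) ^ n =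
      ∑ j ∈ Finset.range (n + 1), ((-1) ^ j * n.choose j : R) • x ^ ((m : ℤ) - j) := by
  rw [sub_eq_neg_add, add_pow, Finset.mul_sum]
  refine Finset.sum_congr rfl fun j _ => ?_
  have hcast : ((-1) ^ j * n.choose j : R) = (((-1) ^ j * n.choose j : ℤ) : R) := by push_cast; rfl
  rw [hcast, Int.cast_smul_eq_zsmul, zsmul_eq_mul, zpow_sub₀ hx, zpow_natCast, zpow_natCast,
    neg_pow, inv_pow]
  push_cast
  ring

end Field

theorem Finset.sum_Icc_sub_eq_sum_range {M : Type*} [AddCommMonoid M] (f : ℤ → M) (m : ℤ)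
    (n : ℕ) : ∑ i ∈ Finset.Icc (m - n) m, f i = ∑ j ∈ Finset.range (n + 1), f (m - j) := by
  refine Finset.sum_nbij' (fun i => (m - i).toNat) (fun j => m - j) ?_ ?_ ?_ ?_ ?_ <;>
    intro i hi <;> simp only [Finset.mem_Icc, Finset.mem_range] at hi ⊢
  all_goals first | omega | congr 1; omega

theorem Nat.even_of_pow_sub_one_eq_mul {p d k m : ℕ} (hp : Odd p) (hd : Odd d)
    (hm : p ^ k - 1 = d * m) : Even m := by
  have h : Even (d * m) := hm ▸ Nat.Odd.sub_odd hp.pow odd_one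
  exact (Nat.even_mul.mp h).resolve_left (Nat.not_even_iff_odd.mpr hd)

theorem Nat.Prime.odd_of_mod_eq_one {p d : ℕ} (hp : p.Prime) (hd : 3 ≤ d) (hpd : p % d = 1) :
    Odd p := by
  refine hp.odd_of_ne_two ?_
  rintro rfl
  rw [Nat.mod_eq_of_lt (by omega)] at hpd
  omega

theorem LaurentSeries.single_neg_inv {K : Type*} [Field K] (n : ℤ) :
    (single (-n) (1 : K) : LaurentSeries K)⁻¹ = single n 1 :=
  inv_eq_of_mul_eq_one_right (by rw [single_mul_single, neg_add_cancel, one_mul, single_zero_one])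

theorem t_pow_pk_expansion_general
    (d b p k m : ℕ) (hd3 : 3 ≤ d) (hdodd : Odd d) (hb : 0 < b)
    (hp : p.Prime) (hpd : p % d = 1)
    (hm : p ^ k - 1 = d * m)
    (u : PowerSeries ℚ)
    (hu0 : PowerSeries.constantCoeff u = 1)
    (hu : (HahnSeries.ofPowerSeries ℤ ℚ u : LaurentSeries ℚ) ^ (b - 1) =
      ((HahnSeries.ofPowerSeries ℤ ℚ u : LaurentSeries ℚ) -
          HahnSeries.single (d : ℤ) 1) ^ b)
    (x : LaurentSeries ℚ)
    (hx : x = HahnSeries.single (-(d : ℤ)) 1 * HahnSeries.ofPowerSeries ℤ ℚ u)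
    (γ : ℤ → ℚ)
    (hγ : ∀ i : ℤ, γ i = (-1 : ℚ) ^ ((m : ℤ) - i).toNat *
      ((m * b).choose ((m : ℤ) - i).toNat : ℚ)) :
    (HahnSeries.single (-(p ^ k : ℤ)) 1 : LaurentSeries ℚ) =
        ∑ i ∈ Finset.Icc ((m : ℤ) - b * m) (m : ℤ),
          γ i • (x ^ i * HahnSeries.single (-1 : ℤ) 1) ∧
      γ 0 = ((m * b).choose m : ℚ) ∧
      γ 0 = (((p ^ k - 1) / d * b).choose ((p ^ k - 1) / d) : ℚ) := by
  have hγ0 : γ 0 = ((m * b).choose m : ℚ) := by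
    have hm2 := Nat.even_of_pow_sub_one_eq_mul (hp.odd_of_mod_eq_one hd3 hpd) hdodd hm
    simp [hγ, hm2.neg_one_pow]
  refine ⟨?_, hγ0, by rw [hγ0, hm, Nat.mul_div_cancel_left _ (by omega)]⟩
  set s : LaurentSeries ℚ := single (-(d : ℤ)) 1
  set U : LaurentSeries ℚ := ofPowerSeries ℤ ℚ u
  have hU : U ≠ 0 := fun h => by
    simp [ofPowerSeries_injective (h.trans (map_zero _).symm)] at hu0
  have hs : s ≠ 0 := single_ne_zero one_ne_zero
  have hx0 : x ≠ 0 := hx ▸ mul_ne_zero hs hU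
  have hcurve : (1 - x⁻¹) ^ b = U⁻¹ :=
    hx ▸ one_sub_inv_mul_pow_eq_inv hs hU hb (by rwa [LaurentSeries.single_neg_inv])
  have hTpow : (single (-(p ^ k : ℤ)) 1 : LaurentSeries ℚ) = s ^ m * single (-1) 1 := by
    have hpk : -(p ^ k : ℤ) = m • -(d : ℤ) + -1 := by
      zify [Nat.one_le_pow k p hp.pos] at hm
      linear_combination -hm
    rw [single_pow, single_mul_single, one_pow, one_mul, hpk]
  have hsm : s ^ m = x ^ m * (1 - x⁻¹) ^ (b * m) := by
    rw [pow_mul, hcurve, hx, mul_pow, inv_pow, mul_inv_cancel_right₀ (pow_ne_zero _ hU)]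
  rw [hTpow, hsm, pow_mul_one_sub_inv_pow_eq_sum (R := ℚ) hx0, Finset.sum_mul,
    ← Nat.cast_mul, Finset.sum_Icc_sub_eq_sum_range]
  refine Finset.sum_congr rfl fun j _ => ?_
  rw [smul_mul_assoc, hγ, sub_sub_cancel, Int.toNat_natCast, mul_comm m b]

/-- Let `d ≥ 3` (odd, as for the curve of statement 17),
`b ≥ 1`, `p` a prime with `p ≡ 1 mod d`, and write `p^k − 1 = d·m`.  Then
`T^{p^k} = ∑_{i=m−bm}^{m} γ_i x(T)^i·T` with
`γ_i = (−1)^{i−m} binom(m·b, m−i)`; in particular the coefficient of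
`x(T)^0·T` is `γ_0 = binom(m·b, m) = binom(((p^k−1)/d)·b, (p^k−1)/d)`. -/
theorem t_pow_pk_expansion
    (d a b p k m : ℕ) (hd3 : 3 ≤ d) (hdodd : Odd d) (hb : 0 < b) (ha : 0 < a)
    (hab : a + b = d + 1) (hp : p.Prime) (hpd : p % d = 1)
    (hm : p ^ k - 1 = d * m)
    (u : PowerSeries ℚ)
    (hu0 : PowerSeries.constantCoeff u = 1)
    (hu : (HahnSeries.ofPowerSeries ℤ ℚ u : LaurentSeries ℚ) ^ (b - 1) =
      ((HahnSeries.ofPowerSeries ℤ ℚ u : LaurentSeries ℚ) -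
          HahnSeries.single (d : ℤ) 1) ^ b)
    (x : LaurentSeries ℚ)
    (hx : x = HahnSeries.single (-(d : ℤ)) 1 * HahnSeries.ofPowerSeries ℤ ℚ u)
    (γ : ℤ → ℚ)
    (hγ : ∀ i : ℤ, γ i = (-1 : ℚ) ^ ((m : ℤ) - i).toNat *
      ((m * b).choose ((m : ℤ) - i).toNat : ℚ)) :
    (HahnSeries.single (-(p ^ k : ℤ)) 1 : LaurentSeries ℚ) =
        ∑ i ∈ Finset.Icc ((m : ℤ) - b * m) (m : ℤ),
          γ i • (x ^ i * HahnSeries.single (-1 : ℤ) 1) ∧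
      γ 0 = ((m * b).choose m : ℚ) ∧
      γ 0 = (((p ^ k - 1) / d * b).choose ((p ^ k - 1) / d) : ℚ) :=
  t_pow_pk_expansion_general d b p k m hd3 hdodd hb hp hpd hm u hu0 hu x hx γ hγ
end
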